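/- arXiv:2409.16424 — 2 statements merged into one kernel-verified Lean document; each statement's English description precedes it below -/
import Mathlib

section
/- Let C be a positively oriented circle centered at z = i with radius 0 < r < 1, let k ≥ 1 be a natural number, and let c, t be real. Then (1/(2π)) ∮_C cos(c·z·t)·(1+iz)^{-(2k+1)} dz = ((c·t)^{2k}/(2k)!) · cosh(c·t). -/
/-!
Since `1 + i z = i (z - i)`, the integrand is `i^{-(2k+1)} cos(c t z) / (z - i)^{2k+1}`, and the
Cauchy integral formula for the `2k`-th derivative of the entire function `z ↦ cos(c t z)` at
`z = i` evaluates the integral; that derivative is `(-1)^k (c t)^{2k} cos(c t i)`, and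
`cos(c t i) = cosh(c t)`.
-/

open Complex
open scoped Real

lemma one_add_I_mul_zpow_neg_odd (z : ℂ) (k : ℕ) :
    (1 + I * z) ^ (-(2 * (k : ℤ) + 1)) = (-1) ^ k * -I * (1 / (z - I) ^ (2 * k + 1)) := by
  have h_odd : -(2 * (k : ℤ) + 1) = -((2 * k + 1 : ℕ) : ℤ) := by push_cast; ring
  have h_pow : I ^ (2 * k + 1) = (-1) ^ k * I := by rw [pow_succ, pow_mul, I_sq]
  rw [h_odd, zpow_neg, zpow_natCast, show 1 + I * z = I * (z - I) by linear_combination I_sq,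
    mul_pow, h_pow, mul_inv, mul_inv, inv_I, ← inv_pow, inv_neg_one]
  ring

lemma iteratedDeriv_even_cos_const_mul (a : ℂ) (k : ℕ) :
    iteratedDeriv (2 * k) (fun z => cos (a * z)) =
      fun z => (-1) ^ k * a ^ (2 * k) * cos (a * z) := by
  rw [iteratedDeriv_comp_const_mul (contDiff_cos.of_le le_top), iteratedDeriv_even_cos]
  funext z
  simp only [Pi.mul_apply, Pi.pow_apply, Pi.neg_apply, Pi.one_apply]
  ring

lemma circleIntegral_cos_const_mul_div_sub_I_pow_odd {r : ℝ} (hr : 0 < r) (a : ℂ) (k : ℕ) :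
    (∮ z in C(I, r), 1 / (z - I) ^ (2 * k + 1) * cos (a * z)) =
      2 * π * I / (2 * k).factorial * ((-1) ^ k * a ^ (2 * k) * cosh a) := by
  have h_entire : Differentiable ℂ fun z => cos (a * z) := by fun_prop
  have := h_entire.differentiableOn.circleIntegral_one_div_sub_center_pow_smul (c := I) hr (2 * k)
  simpa [iteratedDeriv_even_cos_const_mul, cos_mul_I] using this

theorem circleIntegral_cos_odd_pole_general (r : ℝ) (hr0 : 0 < r)
    (k : ℕ) (c t : ℝ) :
    (1 / (2 * (Real.pi : ℂ))) *
      (∮ z in C(Complex.I, r),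
        Complex.cos (c * z * t) * (1 + Complex.I * z) ^ (-(2 * (k : ℤ) + 1))) =
      ((c : ℂ) * t) ^ (2 * k) / ((2 * k).factorial : ℂ) * Complex.cosh (c * t) := by
  have h_integrand : ∀ z : ℂ, cos (c * z * t) * (1 + I * z) ^ (-(2 * (k : ℤ) + 1)) =
      (-1) ^ k * -I * (1 / (z - I) ^ (2 * k + 1) * cos ((c * t : ℂ) * z)) := fun z => by
    rw [one_add_I_mul_zpow_neg_odd, mul_right_comm (c : ℂ)]
    ring
  simp_rw [h_integrand, circleIntegral.integral_const_mul,
    circleIntegral_cos_const_mul_div_sub_I_pow_odd hr0]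
  have h_sign : ((-1 : ℂ) ^ k) ^ 2 = 1 := by rw [← pow_mul, mul_comm, pow_mul]; norm_num
  field_simp
  rw [h_sign, I_sq]
  ring

theorem circleIntegral_cos_odd_pole (r : ℝ) (hr0 : 0 < r) (hr1 : r < 1)
    (k : ℕ) (hk : 1 ≤ k) (c t : ℝ) :
    (1 / (2 * (Real.pi : ℂ))) *
      (∮ z in C(Complex.I, r),
        Complex.cos (c * z * t) * (1 + Complex.I * z) ^ (-(2 * (k : ℤ) + 1))) =
      ((c : ℂ) * t) ^ (2 * k) / ((2 * k).factorial : ℂ) * Complex.cosh (c * t) :=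
  circleIntegral_cos_odd_pole_general r hr0 k c t
end

section
/- Let C be a positively oriented circle centered at z = i with radius 0 < r < 1, let k ≥ 1 be a natural number, and let c, t be real. Then (1/(2π)) ∮_C cos(c·z·t)·(1+iz)^{-2k} dz = -((c·t)^{2k-1}/(2k-1)!) · sinh(c·t). -/
/-!
Since `1 + i z = i (z - i)`, the integrand is `(-1)^k cos (a z) / (z - i)^(2k)` with `a = c t`, so
Cauchy's formula turns the integral into `2πi/(2k-1)!` times the `(2k-1)`-st derivative of
`cos (a z)` at `i`, which is `(-1)^k a^(2k-1) sin (a i) = (-1)^k a^(2k-1) i sinh a`.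
-/

open Complex

theorem one_add_I_mul_zpow_neg_two_mul (z : ℂ) (k : ℕ) :
    (1 + I * z) ^ (-(2 * (k : ℤ))) = (-1) ^ k * (1 / (z - I) ^ (2 * k)) := by
  have h : 1 + I * z = I * (z - I) := by ring_nf; rw [I_sq]; ring
  rw [h, show -(2 * (k : ℤ)) = -((2 * k : ℕ) : ℤ) by push_cast; ring, zpow_neg, zpow_natCast,
    mul_pow, pow_mul, I_sq, mul_inv, ← inv_pow, inv_neg, inv_one, one_div]

theorem iteratedDeriv_odd_cos_const_mul (a z : ℂ) (m : ℕ) :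
    iteratedDeriv (2 * m + 1) (fun w => cos (a * w)) z =
      (-1) ^ (m + 1) * a ^ (2 * m + 1) * sin (a * z) := by
  rw [iteratedDeriv_comp_const_mul contDiff_cos, iteratedDeriv_odd_cos]
  simp only [Pi.mul_apply, Pi.pow_apply, Pi.neg_apply, Pi.one_apply]
  ring

theorem circleIntegral_cos_even_pole_general (r : ℝ) (hr0 : 0 < r)
    (k : ℕ) (hk : 1 ≤ k) (c t : ℝ) :
    (1 / (2 * (Real.pi : ℂ))) *
      (∮ z in C(Complex.I, r),
        Complex.cos (c * z * t) * (1 + Complex.I * z) ^ (-(2 * (k : ℤ)))) =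
      -(((c : ℂ) * t) ^ (2 * k - 1) / ((2 * k - 1).factorial : ℂ)) * Complex.sinh (c * t) := by
  obtain ⟨m, rfl⟩ : ∃ m, k = m + 1 := ⟨k - 1, by omega⟩
  set a : ℂ := c * t
  have hintegrand : (fun z => cos (c * z * t) * (1 + I * z) ^ (-(2 * ((m + 1 : ℕ) : ℤ)))) =
      fun z => (-1) ^ (m + 1) * ((1 / (z - I) ^ (2 * m + 1 + 1)) • cos (a * z)) := by
    funext z
    rw [one_add_I_mul_zpow_neg_two_mul, smul_eq_mul, show (c : ℂ) * z * t = a * z by ring]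
    ring
  have hcauchy : ∮ z in C(I, r), (1 / (z - I) ^ (2 * m + 1 + 1)) • cos (a * z) =
      (2 * Real.pi * I / (2 * m + 1).factorial) •
        iteratedDeriv (2 * m + 1) (fun z => cos (a * z)) I :=
    (differentiable_id.const_mul a).ccos.differentiableOn.circleIntegral_one_div_sub_center_pow_smul
      hr0 _
  rw [hintegrand, circleIntegral.integral_const_mul, hcauchy, iteratedDeriv_odd_cos_const_mul,
    sin_mul_I, show 2 * (m + 1) - 1 = 2 * m + 1 by omega]
  have hpi : (Real.pi : ℂ) ≠ 0 := ofReal_ne_zero.mpr Real.pi_ne_zero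
  have hsign : ((-1 : ℂ) ^ (m + 1)) ^ 2 = 1 := by rw [← pow_mul, pow_mul', neg_one_sq, one_pow]
  rw [smul_eq_mul]
  field_simp
  rw [hsign, I_sq]
  ring

theorem circleIntegral_cos_even_pole (r : ℝ) (hr0 : 0 < r) (hr1 : r < 1)
    (k : ℕ) (hk : 1 ≤ k) (c t : ℝ) :
    (1 / (2 * (Real.pi : ℂ))) *
      (∮ z in C(Complex.I, r),
        Complex.cos (c * z * t) * (1 + Complex.I * z) ^ (-(2 * (k : ℤ)))) =
      -(((c : ℂ) * t) ^ (2 * k - 1) / ((2 * k - 1).factorial : ℂ)) * Complex.sinh (c * t) :=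
  circleIntegral_cos_even_pole_general r hr0 k hk c t
end
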